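/- Let L be a finite enumerable lattice with λ := tp(L), let μ be a partition, let C ⊆ L_μ be a constant type code with minimum distance D(C) ≥ D, and let r := ⌊(D−1)/2⌋. If φ is a partition such that |S(u,r,φ)| > 0 for some (equivalently, every) u ∈ L_μ, then |C| ≤ α(λ,φ) / |S(u,r,φ)|. -/

import Mathlib

/-- The height of an element: the greatest length of chains from `⊥` to `u`. -/
noncomputable def ht {L : Type*} [Preorder L] (u : L) : ℕ := (Order.height u).toNat

/-- An element `z` is a cycle if the interval `[⊥, z]` is a chain. -/
def IsCycle {L : Type*} [Lattice L] [BoundedOrder L] (z : L) : Prop :=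
  IsChain (· ≤ ·) (Set.Icc (⊥ : L) z)

/-- An element `z` is a dual cycle if the interval `[z, ⊤]` is a chain. -/
def IsDualCycle {L : Type*} [Lattice L] [BoundedOrder L] (z : L) : Prop :=
  IsChain (· ≤ ·) (Set.Icc z (⊤ : L))

/-- A lattice is semi-primary if every element is a join of cycles and a meet of
dual cycles. -/
def IsSemiPrimary (L : Type*) [Lattice L] [BoundedOrder L] : Prop :=
  ∀ u : L, (∃ s : Finset L, (∀ z ∈ s, IsCycle z) ∧ u = s.sup id) ∧
           (∃ s : Finset L, (∀ z ∈ s, IsDualCycle z) ∧ u = s.inf id)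

/-- A finite family of lattice elements is independent. -/
def IndepFun {L : Type*} [Lattice L] [BoundedOrder L] {n : ℕ} (z : Fin n → L) : Prop :=
  ∀ i, ((Finset.univ.erase i).sup z) ⊓ z i = ⊥

/-- A partition is (represented by) a multiset of positive natural numbers. -/
def IsPartition (μ : Multiset ℕ) : Prop := ∀ p ∈ μ, 0 < p

/-- The `i`-th largest part of a partition (0-indexed, 0 if out of range). -/
def partGet (μ : Multiset ℕ) (i : ℕ) : ℕ := ((μ.sort (· ≤ ·)).reverse).getD i 0

/-- Componentwise order on partitions: `μ ≤ λ` iff `μᵢ ≤ λᵢ` for all `i`. -/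
def PartLE (μ lam : Multiset ℕ) : Prop := ∀ i, partGet μ i ≤ partGet lam i

/-- For `λ = (sⁿ)` and `μ ≤ λ`, the partition `λ − μ = (s − μₙ, …, s − μ₁)`. -/
def partSub (s n : ℕ) (μ : Multiset ℕ) : Multiset ℕ :=
  Multiset.filter (fun x => 0 < x)
    (↑((List.range n).map (fun i => s - partGet μ i)) : Multiset ℕ)

/-- `u` has type `μ`: `u` is a join of independent nonzero cycles whose multiset of
heights equals `μ`. -/
def IsTypeOf {L : Type*} [Lattice L] [BoundedOrder L] (u : L) (μ : Multiset ℕ) : Prop :=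
  ∃ (n : ℕ) (z : Fin n → L), (∀ i, IsCycle (z i)) ∧ (∀ i, z i ≠ ⊥) ∧ IndepFun z ∧
    u = Finset.univ.sup z ∧ (↑(List.ofFn (fun i => ht (z i))) : Multiset ℕ) = μ

/-- The lattice metric `d(u,v) = h(u ∨ v) − h(u ∧ v)`. -/
noncomputable def dLat {L : Type*} [Lattice L] (u v : L) : ℕ := ht (u ⊔ v) - ht (u ⊓ v)

/-- The sphere of radius `r` centered at `u`. -/
def sph {L : Type*} [Lattice L] (u : L) (r : ℕ) : Set L := {v | dLat u v ≤ r}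

/-- The `t`-th layer of the sphere of radius `r` centered at `u`. -/
def sphH {L : Type*} [Lattice L] (u : L) (r t : ℕ) : Set L :=
  {v | dLat u v ≤ r ∧ ht v = t}

/-- The elements of type `μ` in the sphere of radius `r` centered at `u`. -/
def sphT {L : Type*} [Lattice L] [BoundedOrder L] (u : L) (r : ℕ) (μ : Multiset ℕ) :
    Set L := {v | dLat u v ≤ r ∧ IsTypeOf v μ}

/-- A finite semi-primary lattice is down-enumerable. -/
def DownEnum (L : Type*) [Lattice L] [BoundedOrder L] : Prop :=
  ∀ (u v : L) (φ μ : Multiset ℕ), IsTypeOf u φ → IsTypeOf v φ →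
    Nat.card {w : L // IsTypeOf w μ ∧ w ≤ u} = Nat.card {w : L // IsTypeOf w μ ∧ w ≤ v}

/-- A finite semi-primary lattice is up-enumerable. -/
def UpEnum (L : Type*) [Lattice L] [BoundedOrder L] : Prop :=
  ∀ (u v : L) (φ μ : Multiset ℕ), IsTypeOf u φ → IsTypeOf v φ →
    Nat.card {w : L // IsTypeOf w μ ∧ u ≤ w} = Nat.card {w : L // IsTypeOf w μ ∧ v ≤ w}

/-- A lattice is enumerable if it is both down- and up-enumerable. -/
def Enumerable (L : Type*) [Lattice L] [BoundedOrder L] : Prop := DownEnum L ∧ UpEnum L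

/-- `α(φ,μ)`: the number of elements of type `μ` below a (any) element of type `φ`. -/
noncomputable def alphaP (L : Type*) [Lattice L] [BoundedOrder L] (φ μ : Multiset ℕ) : ℕ :=
  sSup {n | ∃ u : L, IsTypeOf u φ ∧ n = Nat.card {w : L // IsTypeOf w μ ∧ w ≤ u}}

/-- `β(φ,μ)`: the number of elements of type `μ` above a (any) element of type `φ`. -/
noncomputable def betaP (L : Type*) [Lattice L] [BoundedOrder L] (φ μ : Multiset ℕ) : ℕ :=
  sSup {n | ∃ u : L, IsTypeOf u φ ∧ n = Nat.card {w : L // IsTypeOf w μ ∧ u ≤ w}}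

/-- `α(μ, r₁, …, rₙ)`: the number of chains `x₁ ≤ ⋯ ≤ xₙ ≤ w` with `h(xᵢ) = rᵢ`,
below a (any) element `w` of type `μ`. -/
noncomputable def alphaChain (L : Type*) [Lattice L] [BoundedOrder L] (μ : Multiset ℕ)
    {n : ℕ} (r : Fin n → ℕ) : ℕ :=
  sSup {m | ∃ w : L, IsTypeOf w μ ∧
    m = Nat.card {x : Fin n → L // (∀ i, ht (x i) = r i) ∧ Monotone x ∧ ∀ i, x i ≤ w}}


/-!
Spheres of radius `r = ⌊(D - 1) / 2⌋` around distinct codewords are disjoint, so the bound follows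
once all spheres `S(c, r, φ)` with `tp c = μ` have the same size. By modularity
`d(x, v) = h(x) + h(v) - 2 h(x ∧ v)`, so that size is a sum over types `ψ` of the numbers `N(x, ψ)`
of `v ∈ L_φ` with `tp (x ∧ v) = ψ`. Counting the pairs `w ≤ x ∧ v` with `tp w = ψ` in two ways gives
`∑_χ N(x, χ) α(χ, ψ) = α(tp x, ψ) β(ψ, φ)`; here `α(ψ, ψ) = 1` and `α(χ, ψ) = 0` unless `χ = ψ` or
`χ` is the type of an element strictly above one of type `ψ`, so this triangular system shows, by
downward induction on `ψ`, that `N(x, ψ)` depends only on `tp x`. The induction needs every element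
to have a type, i.e. the decomposition theorem for semi-primary lattices: a cycle of maximal height
below `u` has a complement in `[0, u]`.

The counting works for any classification `τ` of a finite lattice whose down- and up-counts factor
through `τ`. Here `τ u` is the set `typeSet u` of all types of `u`: types are not unique a priori,
but by down-enumerability two elements sharing one type share all of them.
-/

open Finset

section Height

variable {L : Type*} [PartialOrder L] [Fintype L]

lemma height_ne_top (x : L) : Order.height x ≠ ⊤ :=
  ne_top_of_le_ne_top (ENat.natCast_ne_top (Fintype.card L))
    (Order.height_le fun p _ => mod_cast p.length_lt_card.le)

lemma coe_ht (x : L) : (ht x : ℕ∞) = Order.height x := ENat.natCast_toNat (height_ne_top x)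

lemma ht_strictMono : StrictMono (ht : L → ℕ) := fun x y h => by
  have := Order.height_strictMono h (height_ne_top x).lt_top
  rwa [← coe_ht, ← coe_ht, Nat.cast_lt] at this

lemma ht_mono : Monotone (ht : L → ℕ) := ht_strictMono.monotone

lemma ht_le_iff {y : L} {n : ℕ} : ht y ≤ n ↔ ∀ z < y, ht z < n := by
  rw [← Nat.cast_le (α := ℕ∞), coe_ht, Order.height_le_coe_iff]
  simp_rw [← coe_ht, Nat.cast_lt]

lemma eq_of_le_of_ht_le {x y : L} (h : x ≤ y) (h' : ht y ≤ ht x) : x = y :=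
  h.eq_of_not_lt fun hlt => (ht_strictMono hlt).not_ge h'

end Height

@[simp] lemma ht_bot {L : Type*} [Preorder L] [OrderBot L] : ht (⊥ : L) = 0 := by simp [ht]

section ModularHeight

variable {L : Type*} [Lattice L] [IsModularLattice L]

lemma CovBy.sup_wcovBy_sup_left {x y : L} (h : x ⋖ y) (c : L) : c ⊔ x ⩿ c ⊔ y := by
  rcases h.eq_or_eq (le_inf h.le le_sup_right) (inf_le_left : y ⊓ (c ⊔ x) ≤ y) with e | e
  · have := covBy_sup_of_inf_covBy_left (a := y) (b := c ⊔ x) (by rwa [e])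
    rw [← sup_assoc, sup_comm y c, sup_assoc, sup_eq_left.2 h.le] at this
    exact this.wcovBy
  · have hy : y ≤ c ⊔ x := e ▸ inf_le_right
    rw [le_antisymm (sup_le_sup_left h.le c) (sup_le le_sup_left hy)]
    exact WCovBy.refl _

lemma CovBy.inf_wcovBy_inf_left {x y : L} (h : x ⋖ y) (c : L) : c ⊓ x ⩿ c ⊓ y :=
  (h.toDual.sup_wcovBy_sup_left (OrderDual.toDual c)).ofDual

variable [Fintype L]

theorem CovBy.ht_eq {x y : L} (h : x ⋖ y) : ht y = ht x + 1 := by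
  induction y using WellFoundedLT.induction generalizing x with | _ y ih =>
  -- each `z < y` is below `x` or satisfies `x ⊓ z ⋖ z`, so `ht z ≤ ht x` by induction
  refine le_antisymm (ht_le_iff.2 fun z hz => ?_) (ht_strictMono h.lt)
  by_cases hzx : z ≤ x
  · exact Nat.lt_succ_of_le (ht_mono hzx)
  have hxz : x ⊔ z = y := (h.eq_or_eq le_sup_left (sup_le h.le hz.le)).resolve_left
    fun e => hzx (e ▸ le_sup_right)
  have hlt : x ⊓ z < x := inf_le_left.lt_of_ne fun e => by
    have : x ≤ z := e ▸ inf_le_right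
    exact hz.ne (by rw [← hxz, sup_eq_right.2 this])
  have := ih z hz (inf_covBy_of_covBy_sup_left (hxz ▸ h))
  have := ht_strictMono hlt
  omega

lemma WCovBy.ht_le {x y : L} (h : x ⩿ y) : ht y ≤ ht x + 1 := by
  rcases wcovBy_iff_covBy_or_eq.1 h with h | rfl
  · exact h.ht_eq.le
  · exact Nat.le_succ _

lemma ht_add_ht_le_of_wcovBy {f : L → L} (hf : ∀ ⦃x y⦄, x ⋖ y → f x ⩿ f y) {x y : L}
    (h : x ≤ y) : ht (f y) + ht x ≤ ht (f x) + ht y := by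
  induction x using WellFoundedGT.induction with | _ x ih =>
  rcases h.eq_or_lt with rfl | hlt
  · rfl
  obtain ⟨t, hxt, hty⟩ := exists_covBy_le_of_lt hlt
  have := ih t hxt.lt hty
  have := (hf hxt).ht_le
  have := hxt.ht_eq
  omega

theorem ht_sup_add_ht_inf (a b : L) : ht (a ⊔ b) + ht (a ⊓ b) = ht a + ht b := by
  have hsub := ht_add_ht_le_of_wcovBy (fun _ _ h => h.sup_wcovBy_sup_left b)
    (inf_le_left : a ⊓ b ≤ a)
  have hsup := ht_add_ht_le_of_wcovBy (fun _ _ h => h.inf_wcovBy_inf_left a)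
    (le_sup_right : b ≤ a ⊔ b)
  rw [show b ⊔ a ⊓ b = b from sup_eq_left.2 inf_le_right, sup_comm] at hsub
  rw [inf_sup_self] at hsup
  omega

end ModularHeight

section Metric

variable {L : Type*} [Lattice L]

lemma dLat_comm (u v : L) : dLat u v = dLat v u := by
  rw [dLat, dLat, sup_comm, inf_comm]

variable [Fintype L]

lemma dLat_pos {u v : L} (h : u ≠ v) : 0 < dLat u v := by
  refine Nat.pos_of_ne_zero fun h0 => h (inf_eq_sup.1 (eq_of_le_of_ht_le inf_le_sup ?_))
  rw [dLat] at h0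
  omega

variable [IsModularLattice L]

lemma dLat_add_two_mul_ht_inf (u v : L) : dLat u v + 2 * ht (u ⊓ v) = ht u + ht v := by
  have := ht_sup_add_ht_inf u v
  have := ht_mono (inf_le_sup : u ⊓ v ≤ u ⊔ v)
  rw [dLat]
  omega

lemma dLat_triangle (u v w : L) : dLat u w ≤ dLat u v + dLat v w := by
  have hsup : ht (u ⊔ w) + ht v ≤ ht (u ⊔ v) + ht (v ⊔ w) := by
    have := ht_sup_add_ht_inf (u ⊔ v) (v ⊔ w)
    have := ht_mono (sup_le_sup le_sup_left le_sup_right : u ⊔ w ≤ (u ⊔ v) ⊔ (v ⊔ w))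
    have := ht_mono (le_inf le_sup_right le_sup_left : v ≤ (u ⊔ v) ⊓ (v ⊔ w))
    omega
  have hinf : ht (u ⊓ v) + ht (v ⊓ w) ≤ ht (u ⊓ w) + ht v := by
    have := ht_sup_add_ht_inf (u ⊓ v) (v ⊓ w)
    have := ht_mono (sup_le inf_le_right inf_le_left : (u ⊓ v) ⊔ (v ⊓ w) ≤ v)
    have := ht_mono (inf_le_inf inf_le_left inf_le_right : (u ⊓ v) ⊓ (v ⊓ w) ≤ u ⊓ w)
    omega
  have := ht_mono (inf_le_sup : u ⊓ v ≤ u ⊔ v)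
  have := ht_mono (inf_le_sup : v ⊓ w ≤ v ⊔ w)
  have := ht_mono (inf_le_sup : u ⊓ w ≤ u ⊔ w)
  simp only [dLat]
  omega

lemma disjoint_filter_dLat_le {c c' : L} {r : ℕ} (h : 2 * r < dLat c c') (A : Finset L) :
    Disjoint {v ∈ A | dLat c v ≤ r} {v ∈ A | dLat c' v ≤ r} := by
  refine disjoint_filter.2 fun v _ hcv hc'v => ?_
  have := dLat_triangle c v c'
  have := dLat_comm v c'
  omega

end Metric

section Chains

variable {L : Type*} [Lattice L]

lemma IsChain.exists_eq_inf' {s : Set L} (hs : IsChain (· ≤ ·) s) {ι : Type*} {t : Finset ι}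
    (ht : t.Nonempty) {f : ι → L} (hf : ∀ i ∈ t, f i ∈ s) : ∃ i ∈ t, f i = t.inf' ht f := by
  refine Finset.inf'_mem (f '' t) ?_ t ht f fun i hi => ⟨i, hi, rfl⟩
  rintro _ ⟨i, hi, rfl⟩ _ ⟨j, hj, rfl⟩
  rcases hs.total (hf i hi) (hf j hj) with h | h
  · exact ⟨i, hi, (inf_eq_left.2 h).symm⟩
  · exact ⟨j, hj, (inf_eq_right.2 h).symm⟩

variable [IsModularLattice L] {a b : L}

lemma IsChain.Icc_sup (h : IsChain (· ≤ ·) (Set.Icc (a ⊓ b) a)) :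
    IsChain (· ≤ ·) (Set.Icc b (a ⊔ b)) := by
  refine (Monotone.isChain_image (f := (· ⊔ b)) (fun _ _ h => sup_le_sup_right h b) h).mono ?_
  rintro y ⟨hby, hya⟩
  refine ⟨y ⊓ a, ⟨?_, inf_le_right⟩, ?_⟩
  · rw [inf_comm a b]
    exact inf_le_inf_right a hby
  · exact (inf_sup_assoc_of_le a hby).trans (inf_eq_left.2 hya)

lemma IsChain.Icc_inf (h : IsChain (· ≤ ·) (Set.Icc b (a ⊔ b))) :
    IsChain (· ≤ ·) (Set.Icc (a ⊓ b) a) := by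
  refine (Monotone.isChain_image (f := (· ⊓ a)) (fun _ _ h => inf_le_inf_right a h) h).mono ?_
  rintro y ⟨hby, hya⟩
  refine ⟨y ⊔ b, ⟨le_sup_right, sup_le_sup_right hya b⟩, ?_⟩
  exact (sup_inf_assoc_of_le b hya).trans (sup_eq_left.2 (inf_comm b a ▸ hby))

end Chains

section Types

variable {L : Type*} [Lattice L] [BoundedOrder L]

lemma isCycle_bot : IsCycle (⊥ : L) := by
  simp [IsCycle]

lemma isTypeOf_bot : IsTypeOf (⊥ : L) 0 :=
  ⟨0, Fin.elim0, fun i => i.elim0, fun i => i.elim0, fun i => i.elim0, by simp, by simp⟩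

lemma indepFun_iff_supIndep {n : ℕ} {z : Fin n → L} : IndepFun z ↔ univ.SupIndep z := by
  simp [IndepFun, supIndep_iff_disjoint_erase, disjoint_iff, inf_comm]

lemma exists_isCycle_le_not_le (hsp : IsSemiPrimary L) {u v : L} (h : ¬ u ≤ v) :
    ∃ c, IsCycle c ∧ c ≤ u ∧ ¬ c ≤ v := by
  obtain ⟨s, hs, rfl⟩ := (hsp u).1
  by_contra! hc
  exact h (Finset.sup_le fun c hcs => hc c (hs c hcs) (Finset.le_sup (f := id) hcs))

variable [IsModularLattice L]

lemma IsTypeOf.cycle_sup {z w : L} {μ : Multiset ℕ} (hw : IsTypeOf w μ) (hz : IsCycle z)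
    (hz0 : z ≠ ⊥) (hzw : Disjoint z w) : IsTypeOf (z ⊔ w) (ht z ::ₘ μ) := by
  obtain ⟨n, zs, hcyc, hne, hind, rfl, rfl⟩ := hw
  refine ⟨n + 1, Fin.cons z zs, Fin.cases hz hcyc, Fin.cases hz0 hne, ?_, ?_, ?_⟩
  · rw [indepFun_iff_supIndep, Fin.univ_succ, Finset.cons_eq_insert]
    refine Finset.SupIndep.insert (Finset.supIndep_map.2 ?_) ?_
    · simpa [Function.comp_def] using indepFun_iff_supIndep.1 hind
    · simpa [Finset.sup_map, Function.comp_def] using hzw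
  · simp [Fin.univ_succ, Finset.sup_map, Function.comp_def]
  · simp [List.ofFn_succ]

variable [Fintype L]

lemma Finset.SupIndep.ht_sup {ι : Type*} {s : Finset ι} {f : ι → L} (hs : s.SupIndep f) :
    ht (s.sup f) = ∑ i ∈ s, ht (f i) := by
  classical
  induction s using Finset.induction_on with
  | empty => simp
  | insert i s hi ih =>
    have hd : f i ⊓ s.sup f = ⊥ :=
      disjoint_iff.1 (hs (Finset.subset_insert i s) (Finset.mem_insert_self i s) hi)
    have := ht_sup_add_ht_inf (f i) (s.sup f)
    rw [hd, ht_bot] at this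
    rw [Finset.sup_insert, Finset.sum_insert hi, ← ih (hs.subset (Finset.subset_insert i s))]
    omega

lemma IsTypeOf.ht_eq {u : L} {μ : Multiset ℕ} (h : IsTypeOf u μ) : ht u = μ.sum := by
  obtain ⟨n, z, -, -, hind, rfl, rfl⟩ := h
  rw [(indepFun_iff_supIndep.1 hind).ht_sup, Multiset.sum_coe, List.sum_ofFn]

end Types

section Decomposition

variable {L : Type*} [Lattice L] [IsModularLattice L] [BoundedOrder L] [Fintype L]

lemma exists_not_le_inf_le_of_covBy (hsp : IsSemiPrimary L) {u v z w : L} (hvu : v ⋖ u)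
    (hz : IsCycle z) (hmax : ∀ c, IsCycle c → c ≤ u → ht c ≤ ht z) (hzw : z ⊓ w = ⊥)
    (hv : z ⊔ w = v) : ∃ t ≤ u, ¬ t ≤ v ∧ t ⊓ v ≤ w := by
  obtain ⟨s, hs, hw⟩ := (hsp w).2
  have hwv : w ≤ v := hv ▸ le_sup_right
  have hne : s.Nonempty := Finset.nonempty_iff_ne_empty.2 fun h => by
    rw [h, Finset.inf_empty] at hw
    exact hvu.lt.not_ge (hw ▸ hwv |>.trans' le_top)
  have hchain : IsChain (· ≤ ·) (Set.Icc w v) := by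
    rw [← hv]
    exact IsChain.Icc_sup (by rwa [hzw])
  obtain ⟨q, hq, hvq⟩ : ∃ q ∈ s, v ⊓ q = w := by
    have hwq : ∀ q ∈ s, w ≤ q := fun q hq => hw ▸ Finset.inf_le hq
    obtain ⟨q, hq, e⟩ := hchain.exists_eq_inf' hne (f := (v ⊓ ·))
      fun q hq => ⟨le_inf hwv (hwq q hq), inf_le_left⟩
    refine ⟨q, hq, le_antisymm ?_ (le_inf hwv (hwq q hq))⟩
    rw [e, hw]
    exact Finset.le_inf fun q' hq' => (Finset.inf'_le _ hq').trans inf_le_right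
  by_cases huq : u ⊓ q ≤ v
  · exfalso
    -- now `[w, u] ≅ [q, u ⊔ q]` is a chain, too short to contain a cycle of `u` outside `v`
    have huqw : u ⊓ q = w :=
      le_antisymm (hvq ▸ le_inf huq inf_le_right) (hvq ▸ inf_le_inf_right q hvu.le)
    have hchain' : IsChain (· ≤ ·) (Set.Icc w u) := by
      rw [← huqw]
      exact IsChain.Icc_inf ((hs q hq).mono (Set.Icc_subset_Icc_right le_top))
    obtain ⟨c, hc, hcu, hcv⟩ := exists_isCycle_le_not_le hsp hvu.lt.not_ge
    have hwc : w ⊔ c = u := by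
      have hwcu : w ⊔ c ≤ u := sup_le (hwv.trans hvu.le) hcu
      rcases hchain'.total ⟨hwv, hvu.le⟩ ⟨le_sup_left, hwcu⟩ with h | h
      · exact (hvu.eq_or_eq h hwcu).resolve_left fun e => hcv (e ▸ le_sup_right)
      · exact absurd (le_sup_right.trans h) hcv
    have h1 := ht_sup_add_ht_inf w c
    have h2 := ht_sup_add_ht_inf z w
    rw [hwc] at h1
    rw [hzw, hv, ht_bot] at h2
    have := hvu.ht_eq
    have := hmax c hc hcu
    omega
  · refine ⟨u ⊓ q, inf_le_left, huq, ?_⟩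
    rw [inf_right_comm, inf_eq_right.2 hvu.le, hvq]

theorem exists_compl_of_isCycle_of_forall_ht_le (hsp : IsSemiPrimary L) {u z : L}
    (hz : IsCycle z) (hzu : z ≤ u) (hmax : ∀ c, IsCycle c → c ≤ u → ht c ≤ ht z) :
    ∃ w, z ⊓ w = ⊥ ∧ z ⊔ w = u := by
  induction u using WellFoundedLT.induction with | _ u ih =>
  rcases hzu.eq_or_lt with rfl | hlt
  · exact ⟨⊥, inf_bot_eq z, sup_bot_eq z⟩
  obtain ⟨v, hzv, hvu⟩ := exists_le_covBy_of_lt hlt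
  obtain ⟨w, hzw, hv⟩ := ih v hvu.lt hzv fun c hc hcv => hmax c hc (hcv.trans hvu.le)
  obtain ⟨t, htu, htv, htw⟩ := exists_not_le_inf_le_of_covBy hsp hvu hz hmax hzw hv
  have hwt : (w ⊔ t) ⊓ v = w := by
    rw [sup_inf_assoc_of_le t (hv ▸ le_sup_right), sup_eq_left.2 htw]
  refine ⟨w ⊔ t, ?_, ?_⟩
  · rw [← inf_eq_left.2 (hv ▸ le_sup_left : z ≤ v), inf_assoc, inf_comm v, hwt, hzw]
  · rw [← sup_assoc, hv]
    exact (hvu.eq_or_eq le_sup_left (sup_le hvu.le htu)).resolve_left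
      fun e => htv (e ▸ le_sup_right)

theorem exists_isTypeOf (hsp : IsSemiPrimary L) (u : L) : ∃ μ, IsTypeOf u μ := by
  induction u using WellFoundedLT.induction with | _ u ih =>
  rcases eq_or_ne u ⊥ with rfl | hu
  · exact ⟨0, isTypeOf_bot⟩
  classical
  obtain ⟨z, hz, hmax⟩ := Finset.exists_max_image {c | IsCycle c ∧ c ≤ u} ht
    ⟨⊥, by simp [isCycle_bot]⟩
  simp only [Finset.mem_filter, Finset.mem_univ, true_and, and_imp] at hz hmax
  have hz0 : z ≠ ⊥ := by
    rintro rfl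
    obtain ⟨c, hc, hcu, hc0⟩ := exists_isCycle_le_not_le hsp (mt le_bot_iff.1 hu)
    have := hmax c hc hcu
    rw [ht_bot] at this
    exact hc0 (eq_of_le_of_ht_le bot_le (by rw [ht_bot]; omega)).ge
  obtain ⟨w, hzw, rfl⟩ := exists_compl_of_isCycle_of_forall_ht_le hsp hz.1 hz.2 hmax
  have hw : w < z ⊔ w := right_lt_sup.2 fun h => hz0 (by rw [← inf_eq_left.2 h, hzw])
  obtain ⟨μ, hμ⟩ := ih w hw
  exact ⟨_, hμ.cycle_sup hz.1 hz0 (disjoint_iff.2 hzw)⟩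

end Decomposition

section Counting

variable {L β : Type*} [Lattice L] [Fintype L] [DecidableEq β] (τ : L → β) (A : Finset L)

lemma sum_inf_eq_of_card_fiber_eq {f : L → ℕ} (hf : f.FactorsThrough τ) {x x' : L}
    (h : ∀ y, f y ≠ 0 → #{v ∈ A | τ (x ⊓ v) = τ y} = #{v ∈ A | τ (x' ⊓ v) = τ y}) :
    ∑ v ∈ A, f (x ⊓ v) = ∑ v ∈ A, f (x' ⊓ v) := by
  have fiberwise (z : L) : ∑ v ∈ A, f (z ⊓ v) =
      ∑ T ∈ univ.image τ, #{v ∈ A | τ (z ⊓ v) = T} * Function.extend τ f 0 T := by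
    rw [← sum_fiberwise_of_maps_to (g := fun v => τ (z ⊓ v)) (t := univ.image τ)
      fun v _ => mem_image_of_mem τ (mem_univ _)]
    refine sum_congr rfl fun T _ => ?_
    rw [sum_congr rfl fun v hv => by rw [← hf.extend_apply 0, (mem_filter.1 hv).2], sum_const,
      smul_eq_mul]
  rw [fiberwise x, fiberwise x']
  refine sum_congr rfl fun T hT => ?_
  obtain ⟨y, -, rfl⟩ := mem_image.1 hT
  rw [hf.extend_apply]
  rcases eq_or_ne (f y) 0 with h0 | h0
  · simp [h0]
  · rw [h y h0]

variable {τ} [DecidableLE L]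

lemma factorsThrough_card_filter_le
    (hdown : ∀ w₀, (fun y => #{w | w ≤ y ∧ τ w = τ w₀}).FactorsThrough τ) :
    (fun y => #{w | w ≤ y}).FactorsThrough τ := by
  intro y y' h
  simp only
  rw [card_eq_sum_card_fiberwise (f := τ) (t := univ.image τ)
      fun w _ => mem_coe.2 (mem_image_of_mem τ (mem_univ w)),
    card_eq_sum_card_fiberwise (f := τ) (t := univ.image τ)
      fun w _ => mem_coe.2 (mem_image_of_mem τ (mem_univ w))]
  refine sum_congr rfl fun T hT => ?_
  obtain ⟨w₀, -, rfl⟩ := mem_image.1 hT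
  simpa only [filter_filter] using hdown w₀ h

lemma card_filter_le_lt_card_filter_le {w y : L} (h : w < y) : #{z | z ≤ w} < #{z | z ≤ y} := by
  refine card_lt_card ((ssubset_iff_of_subset ?_).2 ⟨y, ?_, ?_⟩)
  · intro z
    simp only [mem_filter, mem_univ, true_and]
    exact fun hz => hz.trans h.le
  · simp
  · simpa using h.not_ge


lemma eq_of_le_of_apply_eq (hdown : ∀ w₀, (fun y => #{w | w ≤ y ∧ τ w = τ w₀}).FactorsThrough τ)
    {w y : L} (hwy : w ≤ y) (h : τ w = τ y) : w = y := by
  by_contra hne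
  exact (card_filter_le_lt_card_filter_le (hwy.lt_of_ne hne)).ne
    (factorsThrough_card_filter_le hdown h)

lemma card_filter_le_and_apply_eq_self
    (hdown : ∀ w₀, (fun y => #{w | w ≤ y ∧ τ w = τ w₀}).FactorsThrough τ) (y : L) :
    #{w | w ≤ y ∧ τ w = τ y} = 1 :=
  card_eq_one.2 ⟨y, by
    ext w
    simpa using ⟨fun h => eq_of_le_of_apply_eq hdown h.1 h.2, by rintro rfl; simp⟩⟩

theorem factorsThrough_card_filter_apply_inf_eq
    (hdown : ∀ w₀, (fun y => #{w | w ≤ y ∧ τ w = τ w₀}).FactorsThrough τ)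
    (hup : (fun w => #{v ∈ A | w ≤ v}).FactorsThrough τ) (w₀ : L) :
    (fun x => #{v ∈ A | τ (x ⊓ v) = τ w₀}).FactorsThrough τ := by
  intro x x' hx
  let g : L → ℕ := fun y => if τ y = τ w₀ then 0 else #{w | w ≤ y ∧ τ w = τ w₀}
  have hg : g.FactorsThrough τ := fun y y' h => by
    have e : #{w | w ≤ y ∧ τ w = τ w₀} = #{w | w ≤ y' ∧ τ w = τ w₀} := hdown w₀ h
    simp only [g, h, e]
  have hrest : ∑ v ∈ A, g (x ⊓ v) = ∑ v ∈ A, g (x' ⊓ v) := by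
    refine sum_inf_eq_of_card_fiber_eq τ A hg fun y hy => ?_
    obtain ⟨hy₀, hy⟩ : τ y ≠ τ w₀ ∧ #{w | w ≤ y ∧ τ w = τ w₀} ≠ 0 := by
      by_cases h : τ y = τ w₀ <;> simp_all [g]
    obtain ⟨w, hw⟩ := card_ne_zero.1 hy
    simp only [mem_filter, mem_univ, true_and] at hw
    have : #{z | z ≤ w₀} < #{z | z ≤ y} := by
      have e : #{z | z ≤ w} = #{z | z ≤ w₀} := factorsThrough_card_filter_le hdown hw.2
      rw [← e]
      exact card_filter_le_lt_card_filter_le (hw.1.lt_of_ne fun e => hy₀ (e ▸ hw.2))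
    exact factorsThrough_card_filter_apply_inf_eq hdown hup y hx
  have hcount (z : L) : #{v ∈ A | τ (z ⊓ v) = τ w₀} + ∑ v ∈ A, g (z ⊓ v) =
      #{w | w ≤ z ∧ τ w = τ w₀} * #{v ∈ A | w₀ ≤ v} := by
    calc _ = ∑ v ∈ A, #{w | w ≤ z ⊓ v ∧ τ w = τ w₀} := by
          rw [card_filter, ← sum_add_distrib]
          refine sum_congr rfl fun v _ => ?_
          by_cases h : τ (z ⊓ v) = τ w₀
          · simp only [g, h, if_true, add_zero]
            rw [← h, card_filter_le_and_apply_eq_self hdown]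
          · simp [g, h]
      _ = ∑ v ∈ A,
            #(({w | w ≤ z ∧ τ w = τ w₀} : Finset L).bipartiteAbove (fun v w => w ≤ v) v) := by
          refine sum_congr rfl fun v _ => congrArg card ?_
          ext w
          simp only [mem_bipartiteAbove, mem_filter, mem_univ, true_and, le_inf_iff]
          tauto
      _ = ∑ w ∈ {w | w ≤ z ∧ τ w = τ w₀}, #{v ∈ A | w ≤ v} :=
          sum_card_bipartiteAbove_eq_sum_card_bipartiteBelow _
      _ = _ := by
          rw [sum_const_nat fun w hw => hup (mem_filter.1 hw).2.2]
  have e : #{w | w ≤ x ∧ τ w = τ w₀} = #{w | w ≤ x' ∧ τ w = τ w₀} := hdown w₀ hx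
  have hcx := hcount x
  rw [e, hrest] at hcx
  have := hcount x'
  show #{v ∈ A | τ (x ⊓ v) = τ w₀} = #{v ∈ A | τ (x' ⊓ v) = τ w₀}
  omega
termination_by Fintype.card L - #{z | z ≤ w₀}
decreasing_by
  have := card_filter_le (univ : Finset L) (· ≤ y)
  rw [card_univ] at this
  omega

end Counting

lemma Finset.card_mul_le_card_of_pairwiseDisjoint {ι α : Type*} [DecidableEq α] {C : Finset ι}
    {S : ι → Finset α} {B : Finset α} {m : ℕ} (hd : (C : Set ι).PairwiseDisjoint S)
    (hSB : ∀ c ∈ C, S c ⊆ B) (hS : ∀ c ∈ C, m ≤ #(S c)) : #C * m ≤ #B :=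
  calc #C * m ≤ ∑ c ∈ C, #(S c) := card_nsmul_le_sum C _ m hS
    _ = #(C.biUnion S) := (card_biUnion hd).symm
    _ ≤ #B := card_le_card (biUnion_subset.2 hSB)

section Enumerable

open scoped Classical

variable {L : Type*} [Lattice L] [IsModularLattice L] [BoundedOrder L] [Fintype L]

def typeSet (u : L) : Set (Multiset ℕ) := {μ | IsTypeOf u μ}

lemma IsTypeOf.of_downEnum (hden : DownEnum L) {u u' : L} {μ ψ : Multiset ℕ}
    (hu : IsTypeOf u μ) (hu' : IsTypeOf u' μ) (hψ : IsTypeOf u ψ) : IsTypeOf u' ψ := by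
  have hpos : 0 < Nat.card {w : L // IsTypeOf w ψ ∧ w ≤ u'} := by
    rw [← hden u u' μ ψ hu hu']
    exact Nat.card_pos_iff.2 ⟨⟨⟨u, hψ, le_rfl⟩⟩, inferInstance⟩
  obtain ⟨⟨w, hw, hwu⟩⟩ := (Nat.card_pos_iff.1 hpos).1
  rwa [← eq_of_le_of_ht_le hwu (by rw [hw.ht_eq, hu'.ht_eq, ← hu.ht_eq, hψ.ht_eq])]

lemma typeSet_eq_iff (hden : DownEnum L) {w w₀ : L} {ψ : Multiset ℕ} (hψ : IsTypeOf w₀ ψ) :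
    typeSet w = typeSet w₀ ↔ IsTypeOf w ψ := by
  refine ⟨fun h => ?_, fun h => Set.ext fun χ => ⟨h.of_downEnum hden hψ, hψ.of_downEnum hden h⟩⟩
  show ψ ∈ typeSet w
  rw [h]
  exact hψ

lemma ht_factorsThrough_typeSet (hsp : IsSemiPrimary L) (hden : DownEnum L) :
    (ht : L → ℕ).FactorsThrough typeSet := fun y y' h => by
  obtain ⟨μ, hy⟩ := exists_isTypeOf hsp y
  rw [hy.ht_eq, ((typeSet_eq_iff hden hy).1 h.symm).ht_eq]

lemma factorsThrough_card_filter_le_typeSet_eq (hsp : IsSemiPrimary L) (hden : DownEnum L)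
    (w₀ : L) :
    (fun y : L => #{w | w ≤ y ∧ typeSet w = typeSet w₀}).FactorsThrough typeSet := by
  intro y y' h
  obtain ⟨μ, hy⟩ := exists_isTypeOf hsp y
  obtain ⟨ψ, hψ⟩ := exists_isTypeOf hsp w₀
  have := hden y y' μ ψ hy ((typeSet_eq_iff hden hy).1 h.symm)
  simpa [typeSet_eq_iff hden hψ, Nat.card_eq_fintype_card, Fintype.card_subtype, and_comm]
    using this

lemma factorsThrough_card_filter_isTypeOf_ge (hsp : IsSemiPrimary L) (hden : DownEnum L)
    (hup : UpEnum L) (φ : Multiset ℕ) :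
    (fun w => #{v ∈ ({v | IsTypeOf v φ} : Finset L) | w ≤ v}).FactorsThrough typeSet := by
  intro w w' h
  obtain ⟨μ, hw⟩ := exists_isTypeOf hsp w
  have := hup w w' μ φ hw ((typeSet_eq_iff hden hw).1 h.symm)
  simpa [Nat.card_eq_fintype_card, Fintype.card_subtype, filter_filter] using this

theorem ncard_sphT_eq (hsp : IsSemiPrimary L) (hden : DownEnum L) (hup : UpEnum L) {x x' : L}
    {μ : Multiset ℕ} (hx : IsTypeOf x μ) (hx' : IsTypeOf x' μ) (r : ℕ) (φ : Multiset ℕ) :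
    (sphT x r φ).ncard = (sphT x' r φ).ncard := by
  let A : Finset L := {v | IsTypeOf v φ}
  have hsph {z : L} (hz : IsTypeOf z μ) : (sphT z r φ).ncard =
      ∑ v ∈ A, if μ.sum + φ.sum ≤ r + 2 * ht (z ⊓ v) then 1 else 0 := by
    rw [← card_filter, ← Set.ncard_coe_finset]
    congr 1
    ext v
    simp only [sphT, A, coe_filter, mem_filter, mem_univ, true_and]
    refine ⟨fun ⟨hd, hv⟩ => ⟨hv, ?_⟩, fun ⟨hv, hd⟩ => ⟨?_, hv⟩⟩ <;>
    · have := dLat_add_two_mul_ht_inf z v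
      rw [hz.ht_eq, hv.ht_eq] at this
      omega
  rw [hsph hx, hsph hx']
  exact sum_inf_eq_of_card_fiber_eq typeSet A ((ht_factorsThrough_typeSet hsp hden).comp_left
      fun n => if μ.sum + φ.sum ≤ r + 2 * n then 1 else 0)
    fun y _ => factorsThrough_card_filter_apply_inf_eq A
      (factorsThrough_card_filter_le_typeSet_eq hsp hden)
      (factorsThrough_card_filter_isTypeOf_ge hsp hden hup φ) y ((typeSet_eq_iff hden hx').2 hx)

end Enumerable

theorem stmt15_general {L : Type*} [Lattice L] [IsModularLattice L] [BoundedOrder L] [Fintype L]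
    (hsp : IsSemiPrimary L) (hen : Enumerable L)
    (μ φ : Multiset ℕ)
    (D : ℕ) (C : Set L) (hC : C ⊆ {v : L | IsTypeOf v μ})
    (hmin : ∀ u ∈ C, ∀ v ∈ C, u ≠ v → D ≤ dLat u v)
    (r : ℕ) (hr : r = (D - 1) / 2)
    (u : L) (hu : IsTypeOf u μ) (hpos : 0 < (sphT u r φ).ncard) :
    (C.ncard : ℝ) ≤
      ((Nat.card {w : L // IsTypeOf w φ ∧ w ≤ (⊤ : L)}) : ℝ) / ((sphT u r φ).ncard : ℝ) := by
  classical
  obtain ⟨hden, hup⟩ := hen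
  let A : Finset L := {v | IsTypeOf v φ}
  have hball (c : L) : sphT c r φ = ↑{v ∈ A | dLat c v ≤ r} := by
    ext v
    simp [sphT, A, and_comm]
  have hpack : #C.toFinset * (sphT u r φ).ncard ≤ #A := by
    refine card_mul_le_card_of_pairwiseDisjoint (S := fun c => {v ∈ A | dLat c v ≤ r})
      (fun c hc c' hc' hne => disjoint_filter_dLat_le ?_ A) (fun c _ => filter_subset _ _)
      fun c hc => ?_
    · have := hmin c (by simpa using hc) c' (by simpa using hc') hne
      have := dLat_pos hne
      omega
    · rw [← Set.ncard_coe_finset, ← hball]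
      exact (ncard_sphT_eq hsp hden hup hu (hC (by simpa using hc)) r φ).le
  have hA : Nat.card {w : L // IsTypeOf w φ ∧ w ≤ ⊤} = #A := by
    simp [A, Nat.card_eq_fintype_card, Fintype.card_subtype]
  rw [hA, le_div_iff₀ (by exact_mod_cast hpos), Set.ncard_eq_toFinset_card']
  exact_mod_cast hpack

/-- Sphere packing bound in a finite enumerable lattice: for a constant
type code `C ⊆ L_μ` with minimum distance at least `D`, `r := ⌊(D−1)/2⌋`, and a partition
`φ` with `|S(u,r,φ)| > 0` for `u ∈ L_μ`, one has `|C| ≤ α(λ,φ) / |S(u,r,φ)|`, where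
`λ = tp(L)` (so that `α(λ,φ)` is the number of elements of type `φ` below `⊤`). -/
theorem stmt15 {L : Type*} [Lattice L] [IsModularLattice L] [BoundedOrder L] [Fintype L]
    (hsp : IsSemiPrimary L) (hen : Enumerable L)
    (lam : Multiset ℕ) (hlam : IsTypeOf (⊤ : L) lam)
    (μ φ : Multiset ℕ) (hμ : IsPartition μ) (hφ : IsPartition φ)
    (D : ℕ) (C : Set L) (hC : C ⊆ {v : L | IsTypeOf v μ})
    (hmin : ∀ u ∈ C, ∀ v ∈ C, u ≠ v → D ≤ dLat u v)
    (r : ℕ) (hr : r = (D - 1) / 2)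
    (u : L) (hu : IsTypeOf u μ) (hpos : 0 < (sphT u r φ).ncard) :
    (C.ncard : ℝ) ≤
      ((Nat.card {w : L // IsTypeOf w φ ∧ w ≤ (⊤ : L)}) : ℝ) / ((sphT u r φ).ncard : ℝ) :=
  stmt15_general hsp hen μ φ D C hC hmin r hr u hu hpos
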